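/- Let G be a graph on n vertices with σ₂(G) ≥ n-1 containing at least two vertices. Then G has a Hamiltonian path. -/

import Mathlib

open SimpleGraph

section Aux
open List

variable {V : Type*} [Fintype V] [DecidableEq V] {G : SimpleGraph V} [DecidableRel G.Adj]

/-- crossing lemma: a walk from outside a finset into it crosses an edge. -/
lemma aux_cross {S : Finset V} : ∀ {w a : V}, G.Walk w a → w ∉ S → a ∈ S →
    ∃ u v, u ∉ S ∧ v ∈ S ∧ G.Adj u v
  | _, _, .nil, hw, ha => absurd ha hw
  | _, _, .cons (v := y) h q, hw, ha =>
    if hy : y ∈ S then ⟨_, y, hw, hy, h⟩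
    else aux_cross q hy ha

/-- preconnectedness from the degree condition. -/
lemma aux_reach (hn : 2 ≤ Fintype.card V)
    (hσ₂ : ∀ x y : V, x ≠ y → ¬ G.Adj x y →
      Fintype.card V - 1 ≤ G.degree x + G.degree y) (x y : V) : G.Reachable x y := by
  classical
  rcases eq_or_ne x y with rfl | hne
  · exact Reachable.refl x
  by_cases hadj : G.Adj x y
  · exact hadj.reachable
  suffices h : ∃ z, G.Adj x z ∧ G.Adj z y by
    obtain ⟨z, h1, h2⟩ := h
    exact h1.reachable.trans h2.reachable
  by_contra hz
  push_neg at hz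
  have hdisj : Disjoint (G.neighborFinset x) (G.neighborFinset y) := by
    rw [Finset.disjoint_left]
    intro z hzx hzy
    exact hz z (by simpa using hzx) (by rw [mem_neighborFinset] at hzy; exact hzy.symm)
  have hsub : G.neighborFinset x ∪ G.neighborFinset y ⊆ (Finset.univ.erase y).erase x := by
    intro z hzm
    rcases Finset.mem_union.mp hzm with h | h <;> rw [mem_neighborFinset] at h
    · exact Finset.mem_erase.mpr ⟨h.ne', Finset.mem_erase.mpr ⟨fun hzy => hadj (hzy ▸ h), Finset.mem_univ z⟩⟩
    · exact Finset.mem_erase.mpr ⟨fun hzx => hadj (hzx ▸ h).symm,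
        Finset.mem_erase.mpr ⟨h.ne', Finset.mem_univ z⟩⟩
  have hcard : G.degree x + G.degree y ≤ Fintype.card V - 1 - 1 := by
    have h1 := Finset.card_le_card hsub
    rw [Finset.card_union_of_disjoint hdisj] at h1
    have h2 : ((Finset.univ.erase y).erase x).card = Fintype.card V - 1 - 1 := by
      rw [Finset.card_erase_of_mem (Finset.mem_erase.mpr ⟨hne, Finset.mem_univ x⟩),
        Finset.card_erase_of_mem (Finset.mem_univ y), Finset.card_univ]
    rw [← card_neighborFinset_eq_degree, ← card_neighborFinset_eq_degree]
    omega
  have := hσ₂ x y hne hadj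
  omega

/-- rotate a "cycle" list to start at `v` and prepend `u`. -/
lemma aux_rotate {c : List V} (hc : c.Chain' G.Adj) (hnd : c.Nodup)
    (hne : c ≠ []) (hcyc : G.Adj (c.getLast hne) (c.head hne))
    {u v : V} (hv : v ∈ c) (hu : u ∉ c) (huv : G.Adj u v) :
    ∃ d : List V, d.Chain' G.Adj ∧ d.Nodup ∧ d.length = c.length + 1 := by
  obtain ⟨l1, l2, rfl⟩ := List.append_of_mem hv
  have hperm : ((v :: l2) ++ l1).Perm (l1 ++ (v :: l2)) := List.perm_append_comm
  refine ⟨u :: ((v :: l2) ++ l1), ?_, ?_, by simp; omega⟩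
  · refine List.isChain_cons.mpr ?_
    constructor
    · intro y hy
      simp only [cons_append, head?_cons, Option.mem_def, Option.some.injEq] at hy
      exact hy ▸ huv
    · obtain ⟨h1, h2, _⟩ := List.isChain_append.mp hc
      refine List.isChain_append.mpr ⟨h2, h1, ?_⟩
      intro p hp q hq
      cases l1 with
      | nil => simp at hq
      | cons h1' t1 =>
        have hq' : q = h1' := ((by simpa using hq : h1' = q)).symm
        have hp' : p = ((h1' :: t1) ++ v :: l2).getLast (by simp) := by
          have e1 := List.getLast?_eq_getLast_of_ne_nil (l := (h1' :: t1) ++ v :: l2) (by simp)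
          have e2 := List.getLast?_append_of_ne_nil (h1' :: t1) (l₂ := v :: l2) (by simp)
          have e3 := List.getLast?_eq_getLast_of_ne_nil (l := v :: l2) (by simp)
          rw [e3] at hp
          rw [e2, e3] at e1
          simp only [Option.mem_def, Option.some.injEq] at hp
          rw [← hp]
          exact Option.some_injective _ e1
        have hh : ((h1' :: t1) ++ v :: l2).head (by simp) = h1' := rfl
        rw [hq', hp', ← hh]
        exact hcyc
  · rw [List.nodup_cons]
    refine ⟨fun hmem => hu (hperm.mem_iff.mp hmem), hperm.symm.nodup hnd⟩

/-- build a walk from a chain list. -/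
lemma aux_walk : ∀ (l : List V), l ≠ [] → l.Chain' G.Adj →
    ∃ a b, ∃ p : G.Walk a b, p.support = l
  | [], h, _ => absurd rfl h
  | [x], _, _ => ⟨x, x, Walk.nil, rfl⟩
  | x :: y :: t, _, hc => by
    obtain ⟨a, b, p, hp⟩ := aux_walk (y :: t) (by simp) hc.tail
    have ha : y = a := by
      have h1 := p.support_eq_cons
      rw [hp] at h1
      injection h1
    subst ha
    exact ⟨x, b, Walk.cons (List.isChain_cons_cons.mp hc).1 p, by simp [hp]⟩

lemma aux_gec {l : List V} {a b : ℕ} {ha : a < l.length} (h : a = b) :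
    l[a]'ha = l[b]'(h ▸ ha) := by subst h; rfl

end Aux

/-- Let `G` be a graph on `n ≥ 2` vertices with `σ₂(G) ≥ n - 1`.
Then `G` has a Hamiltonian path. -/
theorem stmt_17 {V : Type*} [Fintype V] [DecidableEq V] (G : SimpleGraph V)
    [DecidableRel G.Adj] (hn : 2 ≤ Fintype.card V)
    (hσ₂ : ∀ x y : V, x ≠ y → ¬ G.Adj x y →
      Fintype.card V - 1 ≤ G.degree x + G.degree y) :
    ∃ (a b : V) (p : G.Walk a b), p.IsHamiltonian := by
  classical
  obtain ⟨x0⟩ : Nonempty V := Fintype.card_pos_iff.mp (by omega)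
  set n := Fintype.card V with hndef
  let P : ℕ → Prop := fun m => ∃ l : List V, l.Chain' G.Adj ∧ l.Nodup ∧ l.length = m
  have hP1 : P 1 := ⟨[x0], List.isChain_singleton x0, List.nodup_singleton x0, rfl⟩
  have hPle : ∀ m, P m → m ≤ n := by
    rintro m ⟨l, _, hnd, rfl⟩
    exact hnd.length_le_card
  set m := Nat.findGreatest P n with hmdef
  have hPm : P m := Nat.findGreatest_spec (P := P) (by omega : 1 ≤ n) hP1
  have hm1 : 1 ≤ m := Nat.le_findGreatest (by omega) hP1
  have hmax : ∀ l : List V, l.Chain' G.Adj → l.Nodup → l.length ≤ m := by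
    intro l h1 h2
    by_contra hlt
    push_neg at hlt
    exact Nat.findGreatest_is_greatest hlt (hPle _ ⟨l, h1, h2, rfl⟩) ⟨l, h1, h2, rfl⟩
  obtain ⟨l, hc, hnd, hlen⟩ := hPm
  have hlne : l ≠ [] := by
    intro h
    rw [h] at hlen
    simp at hlen
    omega
  have hmn : m = n := by
    by_contra hne'
    have hmltn : m < n := lt_of_le_of_ne (hPle m ⟨l, hc, hnd, hlen⟩) hne'
    have hex : ∃ w, w ∉ l := by
      by_contra hall
      push_neg at hall
      have h1 : (Finset.univ : Finset V) ⊆ l.toFinset := fun z _ => List.mem_toFinset.mpr (hall z)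
      have h2 := Finset.card_le_card h1
      rw [Finset.card_univ, List.toFinset_card_of_nodup hnd, hlen] at h2
      omega
    obtain ⟨w, hw⟩ := hex
    set a := l.head hlne with hadef
    set b := l.getLast hlne with hbdef
    have hal : a ∈ l := List.head_mem hlne
    have hbl : b ∈ l := List.getLast_mem hlne
    have hNa : ∀ v, G.Adj a v → v ∈ l := by
      intro v hv
      by_contra hvl
      have hch : (v :: l).Chain' G.Adj := List.isChain_cons.mpr
        ⟨by
          intro y hy
          rw [List.head?_eq_head hlne] at hy
          simp only [Option.mem_def, Option.some.injEq] at hy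
          subst hy
          exact hv.symm, hc⟩
      have := hmax (v :: l) hch (List.nodup_cons.mpr ⟨hvl, hnd⟩)
      simp only [List.length_cons, hlen] at this
      omega
    have hNb : ∀ v, G.Adj b v → v ∈ l := by
      intro v hv
      by_contra hvl
      have hch : (l ++ [v]).Chain' G.Adj := List.isChain_append.mpr
        ⟨hc, List.isChain_singleton v, by
          intro p hp q hq
          rw [List.getLast?_eq_getLast_of_ne_nil hlne] at hp
          simp only [Option.mem_def, Option.some.injEq, List.head?_cons] at hp hq
          subst hp
          subst hq
          exact hv⟩
      have hnd2 : (l ++ [v]).Nodup := by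
        rw [List.nodup_append]
        exact ⟨hnd, List.nodup_singleton v, by
          intro z hz y hz2
          simp only [List.mem_singleton] at hz2
          exact fun h => hvl (hz2 ▸ h ▸ hz)⟩
      have := hmax (l ++ [v]) hch hnd2
      simp only [List.length_append, List.length_singleton, hlen] at this
      omega
    rcases Nat.lt_or_ge m 2 with hm2 | hm2
    · -- m = 1
      have hl1 : l.length = 1 := by omega
      have hla : l = [a] := by
        cases l with
        | nil => exact absurd rfl hlne
        | cons z t =>
          have ht : t = [] := by simpa using hl1
          subst ht
          rfl
      have hdega : G.degree a = 0 := by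
        rw [← card_neighborFinset_eq_degree, Finset.card_eq_zero,
          Finset.eq_empty_iff_forall_notMem]
        intro v hv
        rw [mem_neighborFinset] at hv
        have hmem := hNa v hv
        rw [hla, List.mem_singleton] at hmem
        exact G.loopless.irrefl a (hmem ▸ hv)
      have hdegw : G.degree w = 0 := by
        rw [← card_neighborFinset_eq_degree, Finset.card_eq_zero,
          Finset.eq_empty_iff_forall_notMem]
        intro v hv
        rw [mem_neighborFinset] at hv
        have hch : ([w, v]).Chain' G.Adj := List.isChain_pair.mpr hv
        have hnd2 : ([w, v]).Nodup := by simp [hv.ne]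
        have := hmax [w, v] hch hnd2
        simp at this
        omega
      have haw : a ≠ w := fun h => hw (h ▸ hal)
      have hnadj : ¬ G.Adj a w := fun h => hw (hNa w h)
      have := hσ₂ a w haw hnadj
      rw [hdega, hdegw] at this
      omega
    · -- m ≥ 2
      obtain ⟨k, hk⟩ : ∃ k, m = k + 1 := ⟨m - 1, by omega⟩
      have hk1 : 1 ≤ k := by omega
      have hlenk : l.length = k + 1 := by omega
      have ha0 : a = l[0]'(by omega) := List.head_eq_getElem_zero hlne
      have hbk : b = l[k]'(by omega) := by
        rw [hbdef, List.getLast_eq_getElem]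
        exact aux_gec (by omega)
      have hane : a ≠ b := by
        intro hab
        rw [ha0, hbk] at hab
        have := (List.Nodup.getElem_inj_iff hnd).mp hab
        omega
      have hcyclic : ∃ c : List V, c.Perm l ∧ c.Chain' G.Adj ∧ c.Nodup ∧ ∃ hcne : c ≠ [],
          G.Adj (c.getLast hcne) (c.head hcne) := by
        by_cases hab : G.Adj a b
        · exact ⟨l, List.Perm.refl l, hc, hnd, hlne, hab.symm⟩
        · -- pigeonhole to find a crossing pair
          have hlenn : k + 1 ≤ n - 1 := by
            have hsub : l.toFinset ⊆ Finset.univ.erase w := by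
              intro z hz
              exact Finset.mem_erase.mpr
                ⟨fun h => hw (h ▸ List.mem_toFinset.mp hz), Finset.mem_univ z⟩
            have hcard := Finset.card_le_card hsub
            rw [List.toFinset_card_of_nodup hnd, hlen,
              Finset.card_erase_of_mem (Finset.mem_univ w), Finset.card_univ] at hcard
            omega
          set A : Finset (Fin k) := Finset.univ.filter
            (fun i => G.Adj a (l[(i : ℕ) + 1]'(by have := i.isLt; omega))) with hAdef
          set B : Finset (Fin k) := Finset.univ.filter
            (fun i => G.Adj b (l[(i : ℕ)]'(by have := i.isLt; omega))) with hBdef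
          have hdegA : G.degree a = A.card := by
            rw [← card_neighborFinset_eq_degree]
            have himg : G.neighborFinset a =
                A.image (fun i : Fin k => l[(i : ℕ) + 1]'(by have := i.isLt; omega)) := by
              ext v
              simp only [mem_neighborFinset, Finset.mem_image, hAdef, Finset.mem_filter,
                Finset.mem_univ, true_and]
              constructor
              · intro hv
                obtain ⟨j, hj, rfl⟩ := List.mem_iff_getElem.mp (hNa v hv)
                have hj0 : j ≠ 0 := by
                  rintro rfl
                  exact G.loopless.irrefl a (ha0 ▸ hv)
                have hjk : j - 1 < k := by omega
                refine ⟨⟨j - 1, hjk⟩, ?_, ?_⟩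
                · show G.Adj a (l[j - 1 + 1]'(by omega))
                  have he : l[(j-1)+1]'(by omega) = l[j]'hj := aux_gec (by omega)
                  rw [he]
                  exact hv
                · show l[j - 1 + 1]'(by omega) = l[j]'hj
                  exact aux_gec (by omega)
              · rintro ⟨i, hi, rfl⟩
                exact hi
            rw [himg, Finset.card_image_of_injOn]
            intro i _ j _ hij
            have := (List.Nodup.getElem_inj_iff hnd).mp hij
            exact Fin.ext (by omega)
          have hdegB : G.degree b = B.card := by
            rw [← card_neighborFinset_eq_degree]
            have himg : G.neighborFinset b =
                B.image (fun i : Fin k => l[(i : ℕ)]'(by have := i.isLt; omega)) := by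
              ext v
              simp only [mem_neighborFinset, Finset.mem_image, hBdef, Finset.mem_filter,
                Finset.mem_univ, true_and]
              constructor
              · intro hv
                obtain ⟨j, hj, rfl⟩ := List.mem_iff_getElem.mp (hNb v hv)
                have hjk : j ≠ k := by
                  rintro rfl
                  exact G.loopless.irrefl b (hbk ▸ hv)
                refine ⟨⟨j, by omega⟩, hv, rfl⟩
              · rintro ⟨i, hi, rfl⟩
                exact hi
            rw [himg, Finset.card_image_of_injOn]
            intro i _ j _ hij
            have := (List.Nodup.getElem_inj_iff hnd).mp hij
            exact Fin.ext this
          have hABcard : 1 ≤ (A ∩ B).card := by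
            have hU : (A ∪ B).card ≤ k := by
              calc (A ∪ B).card ≤ (Finset.univ : Finset (Fin k)).card :=
                    Finset.card_le_card (Finset.subset_univ _)
                _ = k := by simp
            have hsum := Finset.card_union_add_card_inter A B
            have hdeg := hσ₂ a b hane hab
            rw [hdegA, hdegB] at hdeg
            omega
          have hABne : (A ∩ B).Nonempty := Finset.card_pos.mp (by omega)
          obtain ⟨i0, hi0⟩ := hABne
          rw [Finset.mem_inter] at hi0
          obtain ⟨hi0A, hi0B⟩ := hi0
          rw [hAdef, Finset.mem_filter] at hi0A
          rw [hBdef, Finset.mem_filter] at hi0B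
          set i : ℕ := (i0 : ℕ) with hidef
          have hik : i < k := i0.isLt
          have hia : G.Adj a (l[i + 1]'(by omega)) := hi0A.2
          have hib : G.Adj b (l[i]'(by omega)) := hi0B.2
          -- build the cyclic list
          set t1 := l.take (i + 1) with ht1def
          set t2 := l.drop (i + 1) with ht2def
          have hlt1 : t1.length = i + 1 := by
            rw [ht1def, List.length_take]
            omega
          have hlt2 : t2.length = k - i := by
            rw [ht2def, List.length_drop]
            omega
          have ht1ne : t1 ≠ [] := by
            intro h
            rw [h] at hlt1
            simp at hlt1
          have ht2ne : t2 ≠ [] := by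
            intro h
            rw [h] at hlt2
            simp at hlt2
            omega
          have g1 : t1.getLast ht1ne = l[i]'(by omega) := by
            rw [List.getLast_eq_getElem, List.getElem_take]
            exact aux_gec (by omega)
          have g2 : t2.getLast ht2ne = b := by
            rw [List.getLast_eq_getElem, List.getElem_drop, hbk]
            exact aux_gec (by omega)
          have g3 : t2.head ht2ne = l[i + 1]'(by omega) := by
            rw [List.head_eq_getElem_zero, List.getElem_drop]
          have g4 : t1.head ht1ne = a := by
            rw [List.head_eq_getElem_zero, List.getElem_take, ha0]
          refine ⟨t1 ++ t2.reverse, ?_, ?_, ?_, ?_, ?_⟩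
          · have hperm1 : (t1 ++ t2.reverse).Perm (t1 ++ t2) :=
              List.Perm.append_left t1 (List.reverse_perm t2)
            have heq : t1 ++ t2 = l := List.take_append_drop _ l
            exact heq ▸ hperm1
          · refine List.isChain_append.mpr ⟨hc.take _, ?_, ?_⟩
            · exact List.isChain_reverse.mpr ((hc.drop _).imp fun x y h => h.symm)
            · intro p hp q hq
              rw [List.getLast?_eq_getLast_of_ne_nil ht1ne] at hp
              rw [List.head?_reverse, List.getLast?_eq_getLast_of_ne_nil ht2ne] at hq
              simp only [Option.mem_def, Option.some.injEq] at hp hq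
              subst hp
              subst hq
              rw [g1, g2]
              exact hib.symm
          · have hperm1 : (t1 ++ t2.reverse).Perm (t1 ++ t2) :=
              List.Perm.append_left t1 (List.reverse_perm t2)
            have heq : t1 ++ t2 = l := List.take_append_drop _ l
            exact ((heq ▸ hperm1).symm.nodup hnd)
          · intro h
            rw [List.append_eq_nil_iff] at h
            exact ht1ne h.1
          · have hgl : (t1 ++ t2.reverse).getLast (by
                intro h
                rw [List.append_eq_nil_iff] at h
                exact ht1ne h.1) = l[i + 1]'(by omega) := by
              have e1 := List.getLast?_eq_getLast_of_ne_nil (l := t1 ++ t2.reverse) (by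
                intro h
                rw [List.append_eq_nil_iff] at h
                exact ht1ne h.1)
              have e2 := List.getLast?_append_of_ne_nil t1 (l₂ := t2.reverse) (by
                simpa using ht2ne)
              rw [List.getLast?_reverse, List.head?_eq_head ht2ne, g3] at e2
              rw [e2] at e1
              exact (Option.some_injective _ e1).symm
            have hhd : (t1 ++ t2.reverse).head (by
                intro h
                rw [List.append_eq_nil_iff] at h
                exact ht1ne h.1) = a := by
              rw [List.head_append_left ht1ne]
              exact g4
            rw [hgl, hhd]
            exact hia.symm
      obtain ⟨c, hcp, hcc, hcnd, hcne, hcycadj⟩ := hcyclic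
      have hreach := aux_reach hn hσ₂ w a
      obtain ⟨pw⟩ := hreach
      obtain ⟨u, v, hu, hv, huv⟩ := aux_cross (S := l.toFinset) pw
        (by simpa using hw) (by simpa using hal)
      have hvc : v ∈ c := hcp.mem_iff.mpr (List.mem_toFinset.mp hv)
      have huc : u ∉ c := fun h => hu (List.mem_toFinset.mpr (hcp.subset h))
      obtain ⟨d, hd1, hd2, hd3⟩ := aux_rotate hcc hcnd hcne hcycadj hvc huc huv
      have := hmax d hd1 hd2
      rw [hd3, hcp.length_eq, hlen] at this
      omega
  -- m = n : build the hamiltonian path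
  obtain ⟨a, b, p, hp⟩ := aux_walk l hlne hc
  refine ⟨a, b, p, ?_⟩
  intro z
  rw [hp]
  apply List.count_eq_one_of_mem hnd
  have huniv : l.toFinset = Finset.univ := Finset.eq_univ_of_card _ (by
    rw [List.toFinset_card_of_nodup hnd, hlen, hmn])
  have : z ∈ l.toFinset := huniv ▸ Finset.mem_univ z
  exact List.mem_toFinset.mp this
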